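/- arXiv:1706.07616 — 5 statements merged into one kernel-verified Lean document; each statement's English description precedes it below -/
import Mathlib

section
/- Let λ, μ be reals with 0 < 2μ < λ and let θ : [0,∞) → (0,∞) be a decreasing function. Then the family of 2×2 matrices Q₆^{[s,t]}(λ,μ) with entries Q₁₁ = 1 − ((λ−2μ)/(2(λ−μ)))(1 − θ(t)/θ(s)), Q₁₂ = ((λ−2μ)/(2(λ−μ)))(1 − θ(t)/θ(s)), Q₂₁ = (λ/(2(λ−μ)))(1 − θ(t)/θ(s)), Q₂₂ = 1 − (λ/(2(λ−μ)))(1 − θ(t)/θ(s)) is right stochastic for 0 ≤ s < t and satisfies the Kolmogorov–Chapman equation Q₆^{[s,t]} = Q₆^{[s,τ]} Q₆^{[τ,t]} for all 0 ≤ s < τ < t. -/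
/-!
Writing `a = (λ - 2μ)/(2(λ - μ))`, `b = λ/(2(λ - μ))` and `x = θ(t)/θ(s)`, the matrix `Q₆^{[s,t]}`
is `!![1 - a(1 - x), a(1 - x); b(1 - x), 1 - b(1 - x)]`. Since `a + b = 1`, these matrices
multiply by multiplying their parameters `x`, and the ratios `θ(τ)/θ(s)` and `θ(t)/θ(τ)` multiply
to `θ(t)/θ(s)`. For `a, b ≥ 0` and `0 ≤ x ≤ 1` the entries are nonnegative, the diagonal ones
being `b + a x` and `a + b x`.
-/

open Matrix

def twoStateMatrix {R : Type*} [CommRing R] (a b x : R) : Matrix (Fin 2) (Fin 2) R :=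
  !![1 - a * (1 - x), a * (1 - x); b * (1 - x), 1 - b * (1 - x)]

section TwoStateMatrix

variable {R : Type*} [CommRing R] {a b : R}

theorem twoStateMatrix_mul (hab : a + b = 1) (x y : R) :
    twoStateMatrix a b x * twoStateMatrix a b y = twoStateMatrix a b (x * y) := by
  have hb : b = 1 - a := eq_sub_of_add_eq' hab
  subst hb
  ext i j
  fin_cases i <;> fin_cases j <;> simp [twoStateMatrix] <;> ring

theorem twoStateMatrix_mem_rowStochastic [PartialOrder R] [IsOrderedRing R] {x : R}
    (ha : 0 ≤ a) (hb : 0 ≤ b) (hab : a + b = 1) (hx₀ : 0 ≤ x) (hx₁ : x ≤ 1) :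
    twoStateMatrix a b x ∈ rowStochastic R (Fin 2) := by
  have h₁ : 1 - a * (1 - x) = b + a * x := by linear_combination -hab
  have h₂ : 1 - b * (1 - x) = a + b * x := by linear_combination -hab
  have hy : 0 ≤ 1 - x := sub_nonneg.2 hx₁
  refine mem_rowStochastic_iff_sum.2 ⟨fun i j => ?_, fun i => ?_⟩
  · fin_cases i <;> fin_cases j <;> simp [twoStateMatrix, h₁, h₂] <;> positivity
  · fin_cases i <;> simp [twoStateMatrix]

end TwoStateMatrix

theorem Q6_weights_nonneg_and_sum_eq_one {lam mu : ℝ} (hmu : 0 < 2 * mu) (hlam : 2 * mu < lam) :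
    0 ≤ (lam - 2 * mu) / (2 * (lam - mu)) ∧ 0 ≤ lam / (2 * (lam - mu)) ∧
      (lam - 2 * mu) / (2 * (lam - mu)) + lam / (2 * (lam - mu)) = 1 := by
  have hden : 0 < 2 * (lam - mu) := by linarith
  refine ⟨div_nonneg (by linarith) hden.le, div_nonneg (by linarith) hden.le, ?_⟩
  rw [← add_div, div_eq_one_iff_eq hden.ne']
  ring

/-- The family Q₆^{[s,t]}(λ,μ) is right stochastic and satisfies the
Kolmogorov–Chapman equation. -/
theorem Q6_right_stochastic_and_KCE (lam mu : ℝ) (hmu : 0 < 2 * mu) (hlam : 2 * mu < lam)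
    (θ : ℝ → ℝ)
    (hθpos : ∀ t, 0 ≤ t → 0 < θ t)
    (hθdec : ∀ s t, 0 ≤ s → s ≤ t → θ t ≤ θ s) :
    (∀ s t : ℝ, 0 ≤ s → s < t →
        (∀ i j, 0 ≤ (!![1 - (lam - 2*mu)/(2*(lam - mu)) * (1 - θ t / θ s),
                        (lam - 2*mu)/(2*(lam - mu)) * (1 - θ t / θ s);
                        lam/(2*(lam - mu)) * (1 - θ t / θ s),
                        1 - lam/(2*(lam - mu)) * (1 - θ t / θ s)]
            : Matrix (Fin 2) (Fin 2) ℝ) i j) ∧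
        (∀ i, ∑ j, (!![1 - (lam - 2*mu)/(2*(lam - mu)) * (1 - θ t / θ s),
                        (lam - 2*mu)/(2*(lam - mu)) * (1 - θ t / θ s);
                        lam/(2*(lam - mu)) * (1 - θ t / θ s),
                        1 - lam/(2*(lam - mu)) * (1 - θ t / θ s)]
            : Matrix (Fin 2) (Fin 2) ℝ) i j = 1)) ∧
      (∀ s τ t : ℝ, 0 ≤ s → s < τ → τ < t →
        (!![1 - (lam - 2*mu)/(2*(lam - mu)) * (1 - θ t / θ s),
            (lam - 2*mu)/(2*(lam - mu)) * (1 - θ t / θ s);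
            lam/(2*(lam - mu)) * (1 - θ t / θ s),
            1 - lam/(2*(lam - mu)) * (1 - θ t / θ s)] : Matrix (Fin 2) (Fin 2) ℝ) =
          !![1 - (lam - 2*mu)/(2*(lam - mu)) * (1 - θ τ / θ s),
             (lam - 2*mu)/(2*(lam - mu)) * (1 - θ τ / θ s);
             lam/(2*(lam - mu)) * (1 - θ τ / θ s),
             1 - lam/(2*(lam - mu)) * (1 - θ τ / θ s)] *
          !![1 - (lam - 2*mu)/(2*(lam - mu)) * (1 - θ t / θ τ),
             (lam - 2*mu)/(2*(lam - mu)) * (1 - θ t / θ τ);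
             lam/(2*(lam - mu)) * (1 - θ t / θ τ),
             1 - lam/(2*(lam - mu)) * (1 - θ t / θ τ)]) := by
  obtain ⟨ha, hb, hab⟩ := Q6_weights_nonneg_and_sum_eq_one hmu hlam
  refine ⟨fun s t hs hst => ?_, fun s τ t hs hsτ hτt => ?_⟩
  · have hθs := hθpos s hs
    have hθt := hθpos t (hs.trans hst.le)
    exact mem_rowStochastic_iff_sum.1 <| twoStateMatrix_mem_rowStochastic ha hb hab
      (div_nonneg hθt.le hθs.le) (div_le_one_of_le₀ (hθdec s t hs hst.le) hθs.le)
  · have hθτ := (hθpos τ (hs.trans hsτ.le)).ne'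
    rw [← div_mul_div_cancel₀' hθτ (θ s) (θ t)]
    exact (twoStateMatrix_mul hab _ _).symm
end

section
/- Let g : [0,∞) → [0,1] be arbitrary, and let u₁₁, u₂₁ : [0,∞) → ℝ. Define a family of 2×2×2 cubic matrices M^{[s,t]} by P_{111}^{[s,t]} = P_{112}^{[s,t]} = u₁₁(s), P_{121}^{[s,t]} = P_{122}^{[s,t]} = g(s) − u₁₁(s), P_{211}^{[s,t]} = P_{212}^{[s,t]} = u₂₁(s), P_{221}^{[s,t]} = P_{222}^{[s,t]} = 1 − g(s) − u₂₁(s). Then M^{[s,t]} is (1,2)-stochastic for all 0 ≤ s < t and satisfies the cubic Kolmogorov–Chapman equation P_{ijr}^{[s,t]} = Σ_{k,n=1}^2 P_{ijk}^{[s,τ]} P_{knr}^{[τ,t]} for all 0 ≤ s < τ < t, if and only if 0 ≤ u₁₁(s) ≤ g(s) and 0 ≤ u₂₁(s) ≤ 1 − g(s) for all s ≥ 0. -/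
/-- The cubic matrix family M₍₁₎^{[s,t]} built from g, u₁₁, u₂₁. -/
def M1fam (g u11 u21 : ℝ → ℝ) (s : ℝ) : Fin 2 → Fin 2 → Fin 2 → ℝ :=
  ![![![u11 s, u11 s], ![g s - u11 s, g s - u11 s]],
    ![![u21 s, u21 s], ![1 - g s - u21 s, 1 - g s - u21 s]]]

/-- M₍₁₎^{[s,t]} is a QSP of type (12|a₀) iff 0 ≤ u₁₁(s) ≤ g(s) and
0 ≤ u₂₁(s) ≤ 1 − g(s). -/
theorem M1fam_QSP_iff (g u11 u21 : ℝ → ℝ)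
    (hg : ∀ s, 0 ≤ s → g s ∈ Set.Icc (0 : ℝ) 1) :
    ((∀ s t : ℝ, 0 ≤ s → s < t →
        (∀ i j k, 0 ≤ M1fam g u11 u21 s i j k) ∧
        (∀ k, ∑ i, ∑ j, M1fam g u11 u21 s i j k = 1)) ∧
      (∀ s τ t : ℝ, 0 ≤ s → s < τ → τ < t → ∀ i j r,
        M1fam g u11 u21 s i j r =
          ∑ k, ∑ n, M1fam g u11 u21 s i j k * M1fam g u11 u21 τ k n r)) ↔
      (∀ s, 0 ≤ s → (0 ≤ u11 s ∧ u11 s ≤ g s) ∧ (0 ≤ u21 s ∧ u21 s ≤ 1 - g s)) := by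
  constructor
  · rintro ⟨hst, -⟩ s hs
    obtain ⟨hpos, -⟩ := hst s (s + 1) hs (by linarith)
    have h0 := hpos 0 0 0
    have h1 := hpos 0 1 0
    have h2 := hpos 1 0 0
    have h3 := hpos 1 1 0
    simp [M1fam] at h0 h1 h2 h3
    exact ⟨⟨h0, by linarith⟩, ⟨h2, by linarith⟩⟩
  · intro h
    constructor
    · intro s t hs _
      obtain ⟨⟨h1, h2⟩, h3, h4⟩ := h s hs
      constructor
      · intro i j k
        fin_cases i <;> fin_cases j <;> fin_cases k <;>
          simp [M1fam] <;> linarith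
      · intro k
        fin_cases k <;> simp [M1fam, Fin.sum_univ_two] <;> ring
    · intro s τ t hs hsτ _ i j r
      have hτ : 0 ≤ τ := by linarith
      obtain ⟨⟨ha1, ha2⟩, hb1, hb2⟩ := h τ hτ
      fin_cases i <;> fin_cases j <;> fin_cases r <;>
        simp [M1fam, Fin.sum_univ_two] <;> ring
end

section
/- Let a, b : [0,∞) → (0,1) be increasing functions with a(t) + b(t) > 1 for all t. Define A^{[t]} = [[a(t), 1 − b(t)], [1 − a(t), b(t)]]. Then for all 0 ≤ s < t, A^{[t]} is invertible and the matrix A^{[s]} (A^{[t]})^{-1} is left stochastic (nonnegative entries, each column sums to 1). -/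
/-!
Each `A^{[t]}` has column sums `1`, i.e. it fixes the row vector `(1, 1)`; hence so does
`A^{[t]}⁻¹` and therefore `A^{[s]} (A^{[t]})⁻¹`. By the adjugate formula, each entry of this product
is `(a t + b t - 1)⁻¹` times a difference `x y - u v` with `0 ≤ u ≤ x` and `0 ≤ v ≤ y`, the
inequalities coming from monotonicity and from `a + b ≥ 1`.
-/

namespace Matrix

variable {n R : Type*} [Fintype n] [DecidableEq n] [CommRing R]

theorem vecMul_mul_inv_eq_of_vecMul_eq {A B : Matrix n n R} {v : n → R} (hA : IsUnit A.det)
    (hvA : v ᵥ* A = v) (hvB : v ᵥ* B = v) : v ᵥ* (B * A⁻¹) = v :=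
  calc v ᵥ* (B * A⁻¹) = v ᵥ* A ᵥ* A⁻¹ := by rw [← vecMul_vecMul, hvB, hvA]
    _ = v := by rw [vecMul_vecMul, mul_nonsing_inv A hA, vecMul_one]

end Matrix

open Matrix

/-- The transition matrix of a two-state chain that stays in state `0` with probability `p` and in
state `1` with probability `q`, acting on column vectors. -/
def twoState {R : Type*} [Ring R] (p q : R) : Matrix (Fin 2) (Fin 2) R :=
  !![p, 1 - q; 1 - p, q]

section CommRing

variable {R : Type*} [CommRing R]

theorem one_vecMul_twoState (p q : R) : 1 ᵥ* twoState p q = 1 := by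
  ext j
  fin_cases j <;> simp [twoState, vecMul, dotProduct, Fin.sum_univ_two]

theorem det_twoState (p q : R) : (twoState p q).det = p + q - 1 := by
  rw [twoState, det_fin_two_of]
  ring

theorem isUnit_twoState_iff {p q : R} : IsUnit (twoState p q) ↔ IsUnit (p + q - 1) := by
  rw [isUnit_iff_isUnit_det, det_twoState]

end CommRing

theorem twoState_mul_inv {K : Type*} [Field K] (p q p' q' : K) :
    twoState p q * (twoState p' q')⁻¹ = (p' + q' - 1)⁻¹ •
      !![p * q' - (1 - q) * (1 - p'), p' * (1 - q) - p * (1 - q');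
        q' * (1 - p) - q * (1 - p'), q * p' - (1 - p) * (1 - q')] := by
  rw [inv_def, det_twoState, Ring.inverse_eq_inv', Matrix.mul_smul, twoState, twoState,
    adjugate_fin_two_of, mul_fin_two]
  congr 1
  ext i j
  fin_cases i <;> fin_cases j <;> simp <;> ring

theorem twoState_mul_inv_mem_colStochastic {K : Type*} [Field K] [LinearOrder K]
    [IsStrictOrderedRing K] {p q p' q' : K} (hpq : 1 ≤ p + q) (hpq' : 1 < p' + q')
    (hp : p ≤ p') (hq : q ≤ q') (hp' : p' ≤ 1) (hq' : q' ≤ 1) :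
    twoState p q * (twoState p' q')⁻¹ ∈ colStochastic K (Fin 2) := by
  have hd : 0 < p' + q' - 1 := by linarith
  refine ⟨fun i j => ?_, vecMul_mul_inv_eq_of_vecMul_eq ?_ (one_vecMul_twoState p' q')
    (one_vecMul_twoState p q)⟩
  · rw [twoState_mul_inv, Matrix.smul_apply, smul_eq_mul]
    refine mul_nonneg (inv_nonneg.2 hd.le) ?_
    fin_cases i <;> fin_cases j <;> simp only [Fin.zero_eta, Fin.mk_one, Fin.isValue, of_apply,
      cons_val', cons_val_zero, cons_val_one, cons_val_fin_one, sub_nonneg] <;>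
      exact mul_le_mul (by linarith) (by linarith) (by linarith) (by linarith)
  · rw [det_twoState]
    exact hd.ne'.isUnit

/-- For increasing a, b : [0,∞) → (0,1) with a(t) + b(t) > 1, the matrices
A^{[t]} = [[a t, 1 − b t], [1 − a t, b t]] are invertible and
A^{[s]} (A^{[t]})⁻¹ is left stochastic for 0 ≤ s < t. -/
theorem A_family_left_stochastic (a b : ℝ → ℝ)
    (ha : ∀ t, 0 ≤ t → a t ∈ Set.Ioo (0 : ℝ) 1)
    (hb : ∀ t, 0 ≤ t → b t ∈ Set.Ioo (0 : ℝ) 1)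
    (hainc : ∀ s t, 0 ≤ s → s ≤ t → a s ≤ a t)
    (hbinc : ∀ s t, 0 ≤ s → s ≤ t → b s ≤ b t)
    (hsum : ∀ t, 0 ≤ t → 1 < a t + b t) :
    ∀ s t : ℝ, 0 ≤ s → s < t →
      IsUnit (!![a t, 1 - b t; 1 - a t, b t] : Matrix (Fin 2) (Fin 2) ℝ) ∧
      (∀ i j, 0 ≤ ((!![a s, 1 - b s; 1 - a s, b s] : Matrix (Fin 2) (Fin 2) ℝ) *
          (!![a t, 1 - b t; 1 - a t, b t] : Matrix (Fin 2) (Fin 2) ℝ)⁻¹) i j) ∧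
      (∀ j, ∑ i, ((!![a s, 1 - b s; 1 - a s, b s] : Matrix (Fin 2) (Fin 2) ℝ) *
          (!![a t, 1 - b t; 1 - a t, b t] : Matrix (Fin 2) (Fin 2) ℝ)⁻¹) i j = 1) := by
  intro s t hs hst
  have ht : 0 ≤ t := hs.trans hst.le
  have hunit : IsUnit (twoState (a t) (b t)) :=
    isUnit_twoState_iff.2 (sub_pos.2 (hsum t ht)).ne'.isUnit
  have hstoch : twoState (a s) (b s) * (twoState (a t) (b t))⁻¹ ∈ colStochastic ℝ (Fin 2) :=
    twoState_mul_inv_mem_colStochastic (hsum s hs).le (hsum t ht) (hainc s t hs hst.le)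
      (hbinc s t hs hst.le) (ha t ht).2.le (hb t ht).2.le
  exact ⟨hunit, mem_colStochastic_iff_sum.1 hstoch⟩
end

section
/- Let {A^{[t]} : t ≥ 0} be a family of invertible m×m real matrices with inverses (A^{[t]})^{-1} = (b^{[t]}_{ij}), and let β^{(s)}_{ijk} be real-valued functions with Σ_{j=1}^m β^{(s)}_{ijk} = a^{[s]}_{ik} for all i, k, s. Then the cubic matrices M^{[s,t]} = (Σ_{k=1}^m β^{(s)}_{ijk} b^{[t]}_{kr})_{i,j,r} satisfy the cubic Kolmogorov–Chapman equation P^{[s,t]}_{ijr} = Σ_{k,n=1}^m P^{[s,τ]}_{ijk} P^{[τ,t]}_{knr} for all 0 ≤ s < τ < t. -/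
/-- Theorem on construction of solutions of the cubic Kolmogorov–Chapman
equation from a family of invertible matrices. -/
theorem cubic_KCE_from_invertible_family (m : ℕ)
    (A : ℝ → Matrix (Fin m) (Fin m) ℝ)
    (hA : ∀ t, 0 ≤ t → IsUnit (A t))
    (β : ℝ → Fin m → Fin m → Fin m → ℝ)
    (hβ : ∀ s, 0 ≤ s → ∀ i k, ∑ j, β s i j k = A s i k) :
    ∀ s τ t : ℝ, 0 ≤ s → s < τ → τ < t → ∀ i j r,
      (∑ k, β s i j k * (A t)⁻¹ k r) =
        ∑ k, ∑ n, (∑ l, β s i j l * (A τ)⁻¹ l k) * (∑ l, β τ k n l * (A t)⁻¹ l r) := by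
  intro s τ t hs hsτ hτt i j r
  have hτ : (0:ℝ) ≤ τ := le_of_lt (hs.trans_lt hsτ)
  have hinv : (A τ)⁻¹ * A τ = 1 :=
    Matrix.nonsing_inv_mul _ ((Matrix.isUnit_iff_isUnit_det _).mp (hA τ hτ))
  have key : ∀ k, (∑ n, ∑ l, β τ k n l * (A t)⁻¹ l r) = ((A τ) * (A t)⁻¹) k r := by
    intro k
    rw [Finset.sum_comm]
    simp [Matrix.mul_apply, ← Finset.sum_mul, hβ τ hτ]
  have hM : (A τ)⁻¹ * ((A τ) * (A t)⁻¹) = (A t)⁻¹ := by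
    rw [← Matrix.mul_assoc, hinv, Matrix.one_mul]
  calc (∑ k, β s i j k * (A t)⁻¹ k r)
      = ∑ l, β s i j l * ((A τ)⁻¹ * ((A τ) * (A t)⁻¹)) l r := by rw [hM]
    _ = ∑ l, β s i j l * ∑ k, (A τ)⁻¹ l k * ((A τ) * (A t)⁻¹) k r := by
        simp [Matrix.mul_apply]
    _ = ∑ l, ∑ k, β s i j l * ((A τ)⁻¹ l k * ((A τ) * (A t)⁻¹) k r) := by
        simp [Finset.mul_sum]
    _ = ∑ k, ∑ l, (β s i j l * (A τ)⁻¹ l k) * ((A τ) * (A t)⁻¹) k r := by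
        rw [Finset.sum_comm]; simp [mul_assoc]
    _ = ∑ k, (∑ l, β s i j l * (A τ)⁻¹ l k) * ((A τ) * (A t)⁻¹) k r := by
        simp [Finset.sum_mul]
    _ = ∑ k, ∑ n, (∑ l, β s i j l * (A τ)⁻¹ l k) * (∑ l, β τ k n l * (A t)⁻¹ l r) := by
        refine Finset.sum_congr rfl fun k _ => ?_
        rw [← Finset.mul_sum, key]
end

section
/- Let Φ : [0,∞) → (0,∞) and b, c, α, β, u, v, w : [0,∞) → ℝ. Define the 3×3×3 cubic matrix M^{[s,t]} (indices in {0,1,2}) by: P_{ij0} = 1 if i=j=0 and 0 otherwise; P_{ij2} = 1 if i=j=0 and 0 otherwise; and the middle layer P_{001} = Φ(t)(1/Φ(t) − 1/Φ(s) − b(s) − c(s) − u(s) − v(s) − w(s)), P_{011} = Φ(t)b(s), P_{021} = Φ(t)c(s), P_{101} = Φ(t)α(s), P_{111} = Φ(t)β(s), P_{121} = Φ(t)(1/Φ(s) − α(s) − β(s)), P_{201} = Φ(t)u(s), P_{211} = Φ(t)v(s), P_{221} = Φ(t)w(s). Then M^{[s,t]} satisfies the cubic Kolmogorov–Chapman equation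 P^{[s,t]}_{ijr} = Σ_{k,n=0}^2 P^{[s,τ]}_{ijk} P^{[τ,t]}_{knr} for all 0 ≤ s < τ < t. -/
/-- The 3×3×3 cubic matrix family from the twin-birth population model,
case (b). Indices i j k ∈ {0,1,2}; layer k = 1 is the nontrivial one. -/
noncomputable def Mbio (Φ b c α β u v w : ℝ → ℝ) (s t : ℝ) :
    Fin 3 → Fin 3 → Fin 3 → ℝ :=
  fun i j k =>
    ![(if i = 0 ∧ j = 0 then (1 : ℝ) else 0),
      (![![Φ t * (1 / Φ t - 1 / Φ s - b s - c s - u s - v s - w s),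
           Φ t * b s, Φ t * c s],
         ![Φ t * α s, Φ t * β s, Φ t * (1 / Φ s - α s - β s)],
         ![Φ t * u s, Φ t * v s, Φ t * w s]] i j),
      (if i = 0 ∧ j = 0 then (1 : ℝ) else 0)] k

/-- The family Mbio satisfies the cubic Kolmogorov–Chapman equation. -/
theorem Mbio_KCE (Φ b c α β u v w : ℝ → ℝ)
    (hΦ : ∀ t, 0 ≤ t → 0 < Φ t) :
    ∀ s τ t : ℝ, 0 ≤ s → s < τ → τ < t → ∀ i j r,
      Mbio Φ b c α β u v w s t i j r =
        ∑ k, ∑ n, Mbio Φ b c α β u v w s τ i j k * Mbio Φ b c α β u v w τ t k n r := by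
  intro s τ t hs hsτ hτt i j r
  have hτ : Φ τ ≠ 0 := ne_of_gt (hΦ τ (le_of_lt (lt_of_le_of_lt hs hsτ)))
  fin_cases i <;> fin_cases j <;> fin_cases r <;>
    simp [Mbio, Fin.sum_univ_succ] <;> field_simp <;> ring
end
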